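/- arXiv:2010.07714 — 2 statements merged into one kernel-verified Lean document; each statement's English description precedes it below -/
import Mathlib

section
/- Let (X,T,μ) be a system with exponential decay of correlations for α-Hölder continuous functions, with constants C, τ > 0. Suppose there are constants C', β > 0 and a point x₀ ∈ X such that μ(B(x₀, r+ρ) \ B(x₀, r)) ≤ C' ρ^β for all ρ ≥ 0 and all 0 < r < 1. Let (B_m)_{m≥1} be a decreasing (nested) sequence of balls with common centre x₀ and radii r_m < 1, and suppose there are ε > 0 and m₀ ∈ ℕ such that μ(B_m) ≥ m^{-1}(log m)^{2+ε} for all m ≥ m₀. Then μ(H_ea) = 1, where H_ea is the set of eventually always hitting points for (B_m). -/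
/-!
Split time into dyadic blocks: block `j` asks whether the orbit visits `B_{2^(j+1)}` before
time `2^j`; since the balls are nested, success of block `j` gives a visit to `B_m` before time
`m` for every `m ∈ [2^j, 2^(j+1))`, so by Borel–Cantelli it suffices that the probabilities of
failure are summable.

Failure of a block means that the visit count `S_N = ∑_{k<N} 1_B ∘ T^k` vanishes, and the
second-moment bound gives `μ(S_N = 0) ≤ Var S_N / (N μ B)^2`. The variance is a sum of
correlations `μ(B ∩ T^{-n} B)`: for `n ≤ M` bound them by `μ B`, and for `n > M` apply decay of
correlations to a Lipschitz cutoff of the ball; the annulus condition bounds the cost of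
replacing `1_B` by the cutoff. Taking `M ≍ log N` gives
`μ(S_N = 0) ≲ log N / (N μ B) + 1 / N`, which is summable along `N = 2^j` exactly because
`μ(B_m) ≥ (log m)^(2+ε) / m`.
-/

open MeasureTheory Filter

noncomputable def holderNorm {X : Type*} [MetricSpace X] (α : ℝ) (f : X → ℝ) : ℝ :=
  (⨆ x, |f x|) + sInf {K : ℝ | 0 ≤ K ∧ ∀ x y, |f x - f y| ≤ K * dist x y ^ α}

section HolderNorm

variable {X : Type*} [MetricSpace X] {α : ℝ} {f : X → ℝ}

lemma holderNorm_nonneg (α : ℝ) (f : X → ℝ) : 0 ≤ holderNorm α f :=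
  add_nonneg (Real.iSup_nonneg fun _ => abs_nonneg _) (Real.sInf_nonneg fun _ hK => hK.1)

lemma holderNorm_le [Nonempty X] {M K : ℝ} (hM : ∀ x, |f x| ≤ M) (hK : 0 ≤ K)
    (hf : ∀ x y, |f x - f y| ≤ K * dist x y ^ α) : holderNorm α f ≤ M + K :=
  add_le_add (ciSup_le hM) (csInf_le ⟨0, fun _ hK => hK.1⟩ ⟨hK, hf⟩)

lemma min_one_le_rpow {t α : ℝ} (ht : 0 ≤ t) (hα0 : 0 ≤ α) (hα1 : α ≤ 1) :
    min 1 t ≤ t ^ α := by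
  rcases le_total t 1 with h | h
  · exact (min_le_right _ _).trans (Real.self_le_rpow_of_le_one ht h hα1)
  · exact (min_le_left _ _).trans (Real.one_le_rpow h hα0)

lemma abs_sub_le_rpow_neg_mul_dist_rpow {ρ : ℝ} (hρ : 0 < ρ) (hα0 : 0 ≤ α) (hα1 : α ≤ 1)
    (hosc : ∀ x y, |f x - f y| ≤ 1) (hlip : ∀ x y, |f x - f y| ≤ dist x y / ρ) (x y : X) :
    |f x - f y| ≤ ρ ^ (-α) * dist x y ^ α := by
  calc |f x - f y| ≤ min 1 (dist x y / ρ) := le_min (hosc x y) (hlip x y)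
    _ ≤ (dist x y / ρ) ^ α := min_one_le_rpow (by positivity) hα0 hα1
    _ = ρ ^ (-α) * dist x y ^ α := by
      rw [Real.div_rpow dist_nonneg hρ.le, Real.rpow_neg hρ.le, div_eq_inv_mul]

end HolderNorm

section BallCutoff

variable {X : Type*} [MetricSpace X] (x₀ : X) (s ρ : ℝ)

noncomputable def ballCutoff (x : X) : ℝ :=
  min 1 (max 0 ((s + ρ - dist x x₀) / ρ))

lemma ballCutoff_nonneg (x : X) : 0 ≤ ballCutoff x₀ s ρ x :=
  le_min zero_le_one (le_max_left _ _)

lemma ballCutoff_le_one (x : X) : ballCutoff x₀ s ρ x ≤ 1 :=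
  min_le_left _ _

lemma abs_ballCutoff_le_one (x : X) : |ballCutoff x₀ s ρ x| ≤ 1 :=
  abs_le.2 ⟨by linarith [ballCutoff_nonneg x₀ s ρ x], ballCutoff_le_one x₀ s ρ x⟩

lemma continuous_ballCutoff : Continuous (ballCutoff x₀ s ρ) := by
  unfold ballCutoff
  fun_prop

variable {s ρ}

lemma ballCutoff_eq_one (hρ : 0 < ρ) {x : X} (hx : x ∈ Metric.ball x₀ s) :
    ballCutoff x₀ s ρ x = 1 := by
  have : 1 ≤ (s + ρ - dist x x₀) / ρ := by
    rw [le_div_iff₀ hρ]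
    linarith [Metric.mem_ball.1 hx]
  exact min_eq_left (this.trans (le_max_right _ _))

lemma ballCutoff_le_indicator (hρ : 0 < ρ) (x : X) :
    ballCutoff x₀ s ρ x ≤ (Metric.ball x₀ (s + ρ)).indicator 1 x := by
  by_cases hx : x ∈ Metric.ball x₀ (s + ρ)
  · simpa [hx] using ballCutoff_le_one x₀ s ρ x
  · have : (s + ρ - dist x x₀) / ρ ≤ 0 :=
      div_nonpos_of_nonpos_of_nonneg (by linarith [not_lt.1 (Metric.mem_ball.not.1 hx)]) hρ.le
    simp [hx, ballCutoff, max_eq_left this]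

lemma abs_ballCutoff_sub_le (hρ : 0 < ρ) (x y : X) :
    |ballCutoff x₀ s ρ x - ballCutoff x₀ s ρ y| ≤ dist x y / ρ := by
  calc |ballCutoff x₀ s ρ x - ballCutoff x₀ s ρ y|
      ≤ |(s + ρ - dist x x₀) / ρ - (s + ρ - dist y x₀) / ρ| := by
        refine (abs_min_sub_min_le_max _ _ _ _).trans ?_
        rw [sub_self, abs_zero, max_eq_right (abs_nonneg _), max_comm 0, max_comm 0]
        exact abs_max_sub_max_le_abs _ _ _
    _ = |dist y x₀ - dist x x₀| / ρ := by
        rw [← sub_div, abs_div, abs_of_pos hρ]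
        ring_nf
    _ ≤ dist x y / ρ := by
        gcongr
        rw [dist_comm x y]
        exact abs_dist_sub_le y x x₀

lemma abs_ballCutoff_sub_le_rpow (hρ : 0 < ρ) {α : ℝ} (hα0 : 0 ≤ α) (hα1 : α ≤ 1) (x y : X) :
    |ballCutoff x₀ s ρ x - ballCutoff x₀ s ρ y| ≤ ρ ^ (-α) * dist x y ^ α :=
  abs_sub_le_rpow_neg_mul_dist_rpow hρ hα0 hα1
    (fun x y => abs_sub_le_of_nonneg_of_le (ballCutoff_nonneg x₀ s ρ x)
      (ballCutoff_le_one x₀ s ρ x) (ballCutoff_nonneg x₀ s ρ y) (ballCutoff_le_one x₀ s ρ y))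
    (abs_ballCutoff_sub_le x₀ hρ) x y

lemma holderNorm_ballCutoff_le (hρ : 0 < ρ) {α : ℝ} (hα0 : 0 ≤ α) (hα1 : α ≤ 1) :
    holderNorm α (ballCutoff x₀ s ρ) ≤ 1 + ρ ^ (-α) :=
  have : Nonempty X := ⟨x₀⟩
  holderNorm_le (abs_ballCutoff_le_one x₀ s ρ) (by positivity)
    (abs_ballCutoff_sub_le_rpow x₀ hρ hα0 hα1)

end BallCutoff

lemma measureReal_inter_preimage_le_integral {X : Type*} [MeasurableSpace X] {μ : Measure X}
    [IsFiniteMeasure μ] {φ : X → ℝ} {f : X → X} {B : Set X}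
    (hφ : Measurable φ) (hφ0 : ∀ x, 0 ≤ φ x) (hφ1 : ∀ x, φ x ≤ 1) (hφB : Set.EqOn φ 1 B)
    (hf : Measurable f) (hB : MeasurableSet B) :
    μ.real (B ∩ f ⁻¹' B) ≤ ∫ x, φ (f x) * φ x ∂μ := by
  rw [← integral_indicator_one (hB.inter (hf hB))]
  refine integral_mono ((integrable_const 1).indicator (hB.inter (hf hB))) ?_ fun x => ?_
  · refine Integrable.mono' (integrable_const 1) ((hφ.comp hf).mul hφ).aestronglyMeasurable
      (ae_of_all _ fun x => ?_)
    rw [Real.norm_eq_abs, abs_mul]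
    exact mul_le_one₀ ((abs_of_nonneg (hφ0 _)).trans_le (hφ1 _)) (abs_nonneg _)
      ((abs_of_nonneg (hφ0 _)).trans_le (hφ1 _))
  · by_cases hx : x ∈ B ∩ f ⁻¹' B
    · simp [hx, hφB hx.1, hφB hx.2]
    · simpa [hx] using mul_nonneg (hφ0 (f x)) (hφ0 x)

section Correlations

variable {X : Type*} [MetricSpace X] [MeasurableSpace X]

def HasExpDecayOfCorrelations (μ : Measure X) (T : X → X) (α C τ : ℝ) : Prop :=
  ∀ (n : ℕ) (f g : X → ℝ),
    (∃ M, ∀ x, |f x| ≤ M) → (∃ K ≥ 0, ∀ x y, |f x - f y| ≤ K * dist x y ^ α) →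
    (∃ M, ∀ x, |g x| ≤ M) → (∃ K ≥ 0, ∀ x y, |g x - g y| ≤ K * dist x y ^ α) →
    |(∫ x, f (T^[n] x) * g x ∂μ) - (∫ x, f x ∂μ) * ∫ x, g x ∂μ| ≤
      C * Real.exp (-τ * n) * holderNorm α f * holderNorm α g

def AnnulusBound (μ : Measure X) (x₀ : X) (C' β : ℝ) : Prop :=
  ∀ ρ : ℝ, 0 ≤ ρ → ∀ s : ℝ, 0 < s → s < 1 →
    (μ (Metric.ball x₀ (s + ρ) \ Metric.ball x₀ s)).toReal ≤ C' * ρ ^ β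

variable [BorelSpace X] {μ : Measure X} [IsFiniteMeasure μ]

lemma measureReal_ball_add_le {x₀ : X} {C' β : ℝ} (hann : AnnulusBound μ x₀ C' β)
    {s ρ : ℝ} (hs : 0 < s) (hs1 : s < 1) (hρ : 0 ≤ ρ) :
    μ.real (Metric.ball x₀ (s + ρ)) ≤ μ.real (Metric.ball x₀ s) + C' * ρ ^ β := by
  have hsub : Metric.ball x₀ s ⊆ Metric.ball x₀ (s + ρ) := Metric.ball_subset_ball (by linarith)
  rw [← measureReal_sdiff_add_inter measurableSet_ball, Set.inter_eq_right.2 hsub, add_comm]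
  gcongr
  exact hann ρ hρ s hs hs1

lemma measureReal_ball_inter_preimage_le {T : X → X} (hT : MeasurePreserving T μ μ)
    {α C τ : ℝ} (hα0 : 0 ≤ α) (hα1 : α ≤ 1) (hC : 0 ≤ C)
    (hdec : HasExpDecayOfCorrelations μ T α C τ)
    {x₀ : X} {C' β : ℝ} (hann : AnnulusBound μ x₀ C' β)
    {s ρ : ℝ} (hs : 0 < s) (hs1 : s < 1) (hρ : 0 < ρ) (n : ℕ) :
    μ.real (Metric.ball x₀ s ∩ T^[n] ⁻¹' Metric.ball x₀ s) ≤
      (μ.real (Metric.ball x₀ s) + C' * ρ ^ β) ^ 2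
        + C * Real.exp (-τ * n) * (1 + ρ ^ (-α)) ^ 2 := by
  set φ := ballCutoff x₀ s ρ
  have hφ : Measurable φ := (continuous_ballCutoff x₀ s ρ).measurable
  have hφint : Integrable φ μ :=
    Integrable.mono' (integrable_const 1) hφ.aestronglyMeasurable
      (ae_of_all _ (abs_ballCutoff_le_one x₀ s ρ))
  have hhit : μ.real (Metric.ball x₀ s ∩ T^[n] ⁻¹' Metric.ball x₀ s) ≤ ∫ x, φ (T^[n] x) * φ x ∂μ :=
    measureReal_inter_preimage_le_integral hφ (ballCutoff_nonneg x₀ s ρ)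
      (ballCutoff_le_one x₀ s ρ) (fun _ hx => ballCutoff_eq_one x₀ hρ hx)
      (hT.measurable.iterate n) measurableSet_ball
  have hmean : ∫ x, φ x ∂μ ≤ μ.real (Metric.ball x₀ s) + C' * ρ ^ β :=
    calc ∫ x, φ x ∂μ ≤ ∫ x, (Metric.ball x₀ (s + ρ)).indicator 1 x ∂μ :=
          integral_mono hφint ((integrable_const 1).indicator measurableSet_ball)
            (ballCutoff_le_indicator x₀ hρ)
      _ = μ.real (Metric.ball x₀ (s + ρ)) := integral_indicator_one measurableSet_ball
      _ ≤ _ := measureReal_ball_add_le hann hs hs1 hρ.le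
  have hholder : ∃ K ≥ 0, ∀ x y, |φ x - φ y| ≤ K * dist x y ^ α :=
    ⟨ρ ^ (-α), by positivity, abs_ballCutoff_sub_le_rpow x₀ hρ hα0 hα1⟩
  have hcorr := (le_abs_self _).trans <| hdec n φ φ ⟨1, abs_ballCutoff_le_one x₀ s ρ⟩ hholder
    ⟨1, abs_ballCutoff_le_one x₀ s ρ⟩ hholder
  have hnorm := holderNorm_ballCutoff_le x₀ (s := s) hρ hα0 hα1
  have hmean0 : 0 ≤ ∫ x, φ x ∂μ := integral_nonneg (ballCutoff_nonneg x₀ s ρ)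
  have hnorm0 := holderNorm_nonneg α φ
  have hCexp : 0 ≤ C * Real.exp (-τ * n) := by positivity
  calc _ ≤ ∫ x, φ (T^[n] x) * φ x ∂μ := hhit
    _ ≤ (∫ x, φ x ∂μ) ^ 2 + C * Real.exp (-τ * n) * holderNorm α φ ^ 2 := by linarith
    _ ≤ _ := by gcongr

end Correlations

lemma sq_integral_mul_measureReal_le {Ω : Type*} [MeasurableSpace Ω] {μ : Measure Ω}
    [IsProbabilityMeasure μ] {f : Ω → ℝ} (hf : MemLp f 2 μ) {E : Set Ω} (hE : MeasurableSet E)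
    (hfE : ∀ x ∈ E, f x = 0) :
    (∫ x, f x ∂μ) ^ 2 * μ.real E ≤ ∫ x, f x ^ 2 ∂μ - (∫ x, f x ∂μ) ^ 2 := by
  set c := ∫ x, f x ∂μ
  have hvar : ∫ x, (f x - c) ^ 2 ∂μ = ∫ x, f x ^ 2 ∂μ - c ^ 2 := by
    rw [← ProbabilityTheory.variance_eq_integral hf.aemeasurable,
      ProbabilityTheory.variance_eq_sub hf]
    rfl
  rw [← hvar, mul_comm, ← smul_eq_mul, ← integral_indicator_const _ hE]
  refine integral_mono ((integrable_const _).indicator hE) ?_ fun x => ?_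
  · exact (hf.sub (memLp_const c)).integrable_sq
  · by_cases hx : x ∈ E
    · simp [hx, hfE x hx]
    · simpa [hx] using sq_nonneg (f x - c)

section HittingTimes

open Finset

variable {X : Type*} {T : X → X}

def missSet (T : X → X) (B : Set X) (N : ℕ) : Set X := {x | ∀ k < N, T^[k] x ∉ B}

noncomputable def hitCount (T : X → X) (B : Set X) (N : ℕ) (x : X) : ℝ :=
  ∑ k ∈ range N, (T^[k] ⁻¹' B).indicator 1 x

lemma missSet_mono {B B' : Set X} {N N' : ℕ} (hB : B' ⊆ B) (hN : N' ≤ N) :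
    missSet T B N ⊆ missSet T B' N' :=
  fun _ hx k hk hkB => hx k (hk.trans_le hN) (hB hkB)

lemma hitCount_eq_zero_of_mem_missSet {B : Set X} {N : ℕ} {x : X} (hx : x ∈ missSet T B N) :
    hitCount T B N x = 0 :=
  sum_eq_zero fun k hk =>
    Set.indicator_of_notMem (show x ∉ T^[k] ⁻¹' B from hx k (mem_range.1 hk)) _

variable [MeasurableSpace X] {μ : Measure X}

lemma measurableSet_missSet (hT : Measurable T) {B : Set X} (hB : MeasurableSet B) (N : ℕ) :
    MeasurableSet (missSet T B N) := by
  have : missSet T B N = ⋂ k ∈ range N, (T^[k] ⁻¹' B)ᶜ := by ext; simp [missSet]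
  rw [this]
  exact .biInter (range N).countable_toSet fun k _ => ((hT.iterate k) hB).compl

lemma memLp_hitCount [IsFiniteMeasure μ] (hT : Measurable T) {B : Set X} (hB : MeasurableSet B)
    (N : ℕ) : MemLp (hitCount T B N) 2 μ :=
  memLp_finsetSum _ fun k _ => (memLp_const 1).indicator ((hT.iterate k) hB)

lemma integral_hitCount [IsFiniteMeasure μ] (hT : MeasurePreserving T μ μ) {B : Set X}
    (hB : MeasurableSet B) (N : ℕ) : ∫ x, hitCount T B N x ∂μ = N * μ.real B := by
  unfold hitCount
  rw [integral_finsetSum _ fun k _ => (integrable_const 1).indicator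
    ((hT.measurable.iterate k) hB)]
  simp_rw [integral_indicator_one ((hT.measurable.iterate _) hB), measureReal_def,
    (hT.iterate _).measure_preimage hB.nullMeasurableSet]
  simp

lemma integral_hitCount_sq [IsFiniteMeasure μ] (hT : Measurable T) {B : Set X}
    (hB : MeasurableSet B) (N : ℕ) :
    ∫ x, hitCount T B N x ^ 2 ∂μ =
      ∑ k ∈ range N, ∑ l ∈ range N, μ.real (T^[k] ⁻¹' B ∩ T^[l] ⁻¹' B) := by
  have hA : ∀ k l, MeasurableSet (T^[k] ⁻¹' B ∩ T^[l] ⁻¹' B) :=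
    fun k l => ((hT.iterate k) hB).inter ((hT.iterate l) hB)
  have hsq : ∀ x, hitCount T B N x ^ 2 =
      ∑ k ∈ range N, ∑ l ∈ range N, (T^[k] ⁻¹' B ∩ T^[l] ⁻¹' B).indicator 1 x := by
    intro x
    simp_rw [hitCount, sq, sum_mul_sum, Set.inter_indicator_one, Pi.mul_apply]
  simp_rw [hsq]
  rw [integral_finsetSum _ fun k _ => integrable_finsetSum _ fun l _ =>
    (integrable_const 1).indicator (hA k l)]
  refine sum_congr rfl fun k _ => ?_
  rw [integral_finsetSum _ fun l _ => (integrable_const 1).indicator (hA k l)]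
  exact sum_congr rfl fun l _ => integral_indicator_one (hA k l)

end HittingTimes

section ShortRangeMixing

open Finset

variable {X : Type*} [MeasurableSpace X] {μ : Measure X} {T : X → X}

lemma measureReal_preimage_inter_preimage (hT : MeasurePreserving T μ μ)
    {B : Set X} (hB : MeasurableSet B) (k l : ℕ) :
    μ.real (T^[k] ⁻¹' B ∩ T^[l] ⁻¹' B) = μ.real (B ∩ T^[Nat.dist k l] ⁻¹' B) := by
  wlog hkl : k ≤ l generalizing k l
  · rw [Set.inter_comm, Nat.dist_comm]
    exact this l k (le_of_not_ge hkl)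
  obtain ⟨n, rfl⟩ := Nat.exists_eq_add_of_le hkl
  rw [Nat.dist_eq_sub_of_le hkl, Nat.add_sub_cancel_left, add_comm, Function.iterate_add,
    Set.preimage_comp, ← Set.preimage_inter]
  exact (hT.iterate k).measureReal_preimage
    (hB.inter ((hT.measurable.iterate n) hB)).nullMeasurableSet

lemma card_filter_dist_le (N k M : ℕ) : #{l ∈ range N | Nat.dist k l ≤ M} ≤ 2 * M + 1 :=
  calc _ ≤ #(Icc (k - M) (k + M)) := card_le_card fun l hl => by
          have := (mem_filter.1 hl).2
          simp only [mem_Icc, Nat.dist] at this ⊢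
          omega
    _ ≤ 2 * M + 1 := by
          rw [Nat.card_Icc]
          omega

lemma measureReal_missSet_le [IsProbabilityMeasure μ] (hT : MeasurePreserving T μ μ)
    {B : Set X} (hB : MeasurableSet B) (hB0 : 0 < μ.real B) {N : ℕ} (hN : 0 < N) {M : ℕ}
    {δ : ℝ} (hδ : 0 ≤ δ) (hmix : ∀ n, M < n → μ.real (B ∩ T^[n] ⁻¹' B) ≤ μ.real B ^ 2 + δ) :
    μ.real (missSet T B N) ≤ (2 * M + 1) / (N * μ.real B) + δ / μ.real B ^ 2 := by
  set a := μ.real B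
  have hpair : ∀ k l, μ.real (T^[k] ⁻¹' B ∩ T^[l] ⁻¹' B) ≤
      a ^ 2 + δ + if Nat.dist k l ≤ M then a else 0 := by
    intro k l
    rw [measureReal_preimage_inter_preimage hT hB]
    split_ifs with h
    · linarith [measureReal_mono (μ := μ) (Set.inter_subset_left (s := B)
        (t := T^[Nat.dist k l] ⁻¹' B)), sq_nonneg a]
    · simpa using hmix _ (not_le.1 h)
  have hrow : ∀ k, ∑ l ∈ range N, (a ^ 2 + δ + if Nat.dist k l ≤ M then a else 0) ≤
      N * (a ^ 2 + δ) + (2 * M + 1) * a := by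
    intro k
    rw [sum_add_distrib, ← sum_filter, sum_const, sum_const, card_range, nsmul_eq_mul,
      nsmul_eq_mul]
    gcongr
    exact_mod_cast card_filter_dist_le N k M
  have hsum : ∑ k ∈ range N, ∑ l ∈ range N, μ.real (T^[k] ⁻¹' B ∩ T^[l] ⁻¹' B) ≤
      N * (N * (a ^ 2 + δ) + (2 * M + 1) * a) :=
    calc _ ≤ ∑ k ∈ range N, (N * (a ^ 2 + δ) + (2 * M + 1) * a) :=
          sum_le_sum fun k _ => (sum_le_sum fun l _ => hpair k l).trans (hrow k)
      _ = _ := by rw [sum_const, card_range, nsmul_eq_mul]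
  have hmoment := sq_integral_mul_measureReal_le (memLp_hitCount (μ := μ) hT.measurable hB N)
    (measurableSet_missSet hT.measurable hB N) fun _ => hitCount_eq_zero_of_mem_missSet
  rw [integral_hitCount hT hB, integral_hitCount_sq hT.measurable hB] at hmoment
  have hNa : 0 < (N : ℝ) * a := by positivity
  calc μ.real (missSet T B N) ≤ (N ^ 2 * δ + N * (2 * M + 1) * a) / (N * a) ^ 2 := by
        rw [le_div_iff₀ (by positivity)]
        nlinarith
    _ = _ := by
        field_simp
        ring

end ShortRangeMixing

section DyadicBlocks

variable {X : Type*} {T : X → X}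

lemma compl_setOf_eventually_hit_subset_limsup {B : ℕ → Set X} (hB : Antitone B) :
    {x | ∀ᶠ m in atTop, ∃ k < m, T^[k] x ∈ B m}ᶜ ⊆
      limsup (fun j => missSet T (B (2 ^ (j + 1))) (2 ^ j)) atTop := by
  intro x hx
  rw [Set.mem_compl_iff, Set.mem_ofPred_eq, not_eventually] at hx
  rw [mem_limsup_iff_frequently_mem]
  have hlog : Tendsto (Nat.log 2) atTop atTop :=
    tendsto_atTop_atTop.2 fun J => ⟨2 ^ J, fun m hm => Nat.le_log_of_pow_le one_lt_two hm⟩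
  refine hlog.frequently ((hx.and_eventually (eventually_ne_atTop 0)).mono fun m hm => ?_)
  obtain ⟨hmiss, hm0⟩ := hm
  simp only [not_exists, not_and] at hmiss
  exact missSet_mono (hB (Nat.lt_pow_succ_log_self one_lt_two m).le)
    (Nat.pow_log_le_self 2 hm0) hmiss

lemma measure_setOf_eventually_hit_eq_one [MeasurableSpace X] {μ : Measure X}
    [IsProbabilityMeasure μ] {B : ℕ → Set X} (hB : Antitone B)
    (hsum : Summable fun j => μ.real (missSet T (B (2 ^ (j + 1))) (2 ^ j))) :
    μ {x | ∀ᶠ m in atTop, ∃ k < m, T^[k] x ∈ B m} = 1 := by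
  have hlimsup : μ (limsup (fun j => missSet T (B (2 ^ (j + 1))) (2 ^ j)) atTop) = 0 :=
    measure_limsup_atTop_eq_zero <| by
      simpa [measureReal_def, ENNReal.ofReal_toReal] using hsum.tsum_ofReal_ne_top
  rw [measure_congr (ae_eq_univ.2 (measure_mono_null
    (compl_setOf_eventually_hit_subset_limsup hB) hlimsup)), measure_univ]

end DyadicBlocks

lemma div_le_mul_rpow_neg_of_rpow_le {c L x p ε : ℝ} (hc : 0 ≤ c) (hL : 1 ≤ L) (hx : x ≤ L)
    (hp : L ^ (2 + ε) ≤ 2 * p) : (c * x + 3) / p ≤ 2 * (c + 3) * L ^ (-(1 + ε)) := by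
  have hL0 : 0 < L := by linarith
  have hLε : 0 < L ^ (1 + ε) := Real.rpow_pos_of_pos hL0 _
  have hsplit : L ^ (2 + ε) = L * L ^ (1 + ε) := by
    rw [show 2 + ε = 1 + (1 + ε) by ring, Real.rpow_add hL0, Real.rpow_one]
  have hp0 : 0 < p := by nlinarith
  rw [Real.rpow_neg hL0.le, div_le_iff₀ hp0]
  calc c * x + 3 ≤ (c + 3) * L := by nlinarith
    _ = 2 * (c + 3) * (L ^ (1 + ε))⁻¹ * (L ^ (2 + ε) / 2) := by
      rw [hsplit]
      field_simp
    _ ≤ _ := by gcongr; linarith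

section Parameters

variable {X : Type*} [MetricSpace X] [MeasurableSpace X] [BorelSpace X]
  {μ : Measure X} [IsProbabilityMeasure μ] {T : X → X} {α C τ C' β : ℝ} {x₀ : X}

lemma measureReal_ball_inter_preimage_le_sq_add (hT : MeasurePreserving T μ μ)
    (hα0 : 0 ≤ α) (hα1 : α ≤ 1) (hC : 0 ≤ C) (hτ : 0 < τ)
    (hdec : HasExpDecayOfCorrelations μ T α C τ) (hC' : 0 ≤ C') (hβ : 0 < β)
    (hann : AnnulusBound μ x₀ C' β) {s : ℝ} (hs : 0 < s) (hs1 : s < 1) {u : ℝ} (hu : 0 ≤ u)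
    {n : ℕ} (hn : (3 + 6 * α / β) / τ * u ≤ n) :
    μ.real (Metric.ball x₀ s ∩ T^[n] ⁻¹' Metric.ball x₀ s) ≤
      μ.real (Metric.ball x₀ s) ^ 2 + (2 * C' + C' ^ 2 + 4 * C) * Real.exp (-3 * u) := by
  -- `ρ = e^{-3u/β}` makes the annulus error `C' ρ^β = C' e^{-3u}`, and the lag bound
  -- `τ n ≥ (3 + 6α/β) u` beats the squared Hölder norm `(1 + ρ^{-α})^2 ≤ 4 e^{6αu/β}`.
  set ρ := Real.exp (-(3 / β) * u)
  set a := μ.real (Metric.ball x₀ s)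
  set e := Real.exp (-3 * u)
  have hρβ : ρ ^ β = e := by
    rw [← Real.exp_mul]
    congr 1
    field_simp
  have hρα : ρ ^ (-α) = Real.exp (3 * α / β * u) := by
    rw [← Real.exp_mul]
    congr 1
    field_simp
  have ha1 : a ≤ 1 := measureReal_le_one
  have he1 : e ≤ 1 := Real.exp_le_one_iff.2 (by linarith)
  have hannulus : (a + C' * ρ ^ β) ^ 2 ≤ a ^ 2 + (2 * C' + C' ^ 2) * e := by
    rw [hρβ]
    have he0 : 0 ≤ e := (Real.exp_pos _).le
    nlinarith [mul_nonneg (mul_nonneg hC' he0) (sub_nonneg.2 ha1),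
      mul_nonneg (mul_nonneg (sq_nonneg C') he0) (sub_nonneg.2 he1)]
  have hcorr : Real.exp (-τ * n) * (1 + ρ ^ (-α)) ^ 2 ≤ 4 * e := by
    have hexp : Real.exp (-τ * n) ≤ Real.exp (-(3 + 6 * α / β) * u) := by
      rw [Real.exp_le_exp]
      have := mul_le_mul_of_nonneg_left hn hτ.le
      rw [← mul_assoc, mul_div_cancel₀ _ hτ.ne'] at this
      linarith
    have hpow : (1 + ρ ^ (-α)) ^ 2 ≤ 4 * Real.exp (6 * α / β * u) := by
      have h1 : 1 ≤ Real.exp (3 * α / β * u) := Real.one_le_exp (by positivity)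
      have h2 : Real.exp (3 * α / β * u) ^ 2 = Real.exp (6 * α / β * u) := by
        rw [← Real.exp_nat_mul]; ring_nf
      rw [hρα]
      nlinarith
    calc _ ≤ Real.exp (-(3 + 6 * α / β) * u) * (4 * Real.exp (6 * α / β * u)) := by gcongr
      _ = 4 * Real.exp (-3 * u) := by
        rw [mul_left_comm, ← Real.exp_add]
        ring_nf
  calc _ ≤ (a + C' * ρ ^ β) ^ 2 + C * Real.exp (-τ * n) * (1 + ρ ^ (-α)) ^ 2 :=
        measureReal_ball_inter_preimage_le hT hα0 hα1 hC hdec hann hs hs1 (Real.exp_pos _) n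
    _ ≤ a ^ 2 + (2 * C' + C' ^ 2) * e + C * (4 * e) := by
        rw [mul_assoc]
        gcongr
    _ = _ := by ring

lemma exists_measureReal_missSet_ball_le (hT : MeasurePreserving T μ μ)
    (hα0 : 0 ≤ α) (hα1 : α ≤ 1) (hC : 0 ≤ C) (hτ : 0 < τ)
    (hdec : HasExpDecayOfCorrelations μ T α C τ) (hC' : 0 ≤ C') (hβ : 0 < β)
    (hann : AnnulusBound μ x₀ C' β) :
    ∃ c K : ℝ, 0 ≤ c ∧ ∀ N : ℕ, 0 < N → ∀ s, 0 < s → s < 1 →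
      1 / (2 * N) ≤ μ.real (Metric.ball x₀ s) →
      μ.real (missSet T (Metric.ball x₀ s) N) ≤
        (c * Real.log N + 3) / (N * μ.real (Metric.ball x₀ s)) + K / N := by
  set κ := (3 + 6 * α / β) / τ
  set K₀ := 2 * C' + C' ^ 2 + 4 * C
  refine ⟨2 * κ, 4 * K₀, by positivity, fun N hN s hs hs1 ha => ?_⟩
  set a := μ.real (Metric.ball x₀ s)
  set u := Real.log N
  have hN1 : (1 : ℝ) ≤ N := by exact_mod_cast hN
  have hu : 0 ≤ u := Real.log_nonneg hN1
  have ha0 : 0 < a := lt_of_lt_of_le (by positivity) ha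
  set M := ⌈κ * u⌉₊
  have hmiss := measureReal_missSet_le hT measurableSet_ball ha0 hN (M := M)
    (by positivity : 0 ≤ K₀ * Real.exp (-3 * u)) fun n hn =>
      measureReal_ball_inter_preimage_le_sq_add hT hα0 hα1 hC hτ hdec hC' hβ hann hs hs1 hu
        ((Nat.le_ceil _).trans (by exact_mod_cast hn.le))
  have hM : (2 * M + 1 : ℝ) ≤ 2 * κ * u + 3 := by
    linarith [Nat.ceil_lt_add_one (by positivity : 0 ≤ κ * u)]
  have hexp : Real.exp (-3 * u) = 1 / N ^ 3 := by
    have : 3 * u = Real.log (N ^ 3) := by simp [u, Real.log_pow]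
    rw [neg_mul, Real.exp_neg, this, Real.exp_log (by positivity), one_div]
  have hδ : K₀ * Real.exp (-3 * u) / a ^ 2 ≤ 4 * K₀ / N :=
    calc _ ≤ K₀ * Real.exp (-3 * u) / (1 / (2 * N)) ^ 2 := by gcongr
      _ = 4 * K₀ / N := by
        rw [hexp]
        field_simp
        ring
  calc _ ≤ (2 * M + 1) / (N * a) + K₀ * Real.exp (-3 * u) / a ^ 2 := hmiss
    _ ≤ _ := by gcongr

lemma exists_measureReal_missSet_dyadic_le (hT : MeasurePreserving T μ μ)
    (hα0 : 0 ≤ α) (hα1 : α ≤ 1) (hC : 0 ≤ C) (hτ : 0 < τ)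
    (hdec : HasExpDecayOfCorrelations μ T α C τ) (hC' : 0 ≤ C') (hβ : 0 < β)
    (hann : AnnulusBound μ x₀ C' β) {ε : ℝ} (hε : 0 ≤ ε) :
    ∃ c K : ℝ, ∀ j : ℕ, 1 ≤ j → ∀ s, 0 < s → s < 1 →
      Real.log ((2 ^ (j + 1) : ℕ) : ℝ) ^ (2 + ε) / ((2 ^ (j + 1) : ℕ) : ℝ) ≤
        μ.real (Metric.ball x₀ s) →
      μ.real (missSet T (Metric.ball x₀ s) (2 ^ j)) ≤
        c * ((j : ℝ) + 1) ^ (-(1 + ε)) + K * (1 / 2) ^ j := by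
  obtain ⟨c, K, hc, hmiss⟩ :=
    exists_measureReal_missSet_ball_le hT hα0 hα1 hC hτ hdec hC' hβ hann
  refine ⟨2 * (c + 3) * Real.log 2 ^ (-(1 + ε)), K, fun j hj s hs hs1 ha => ?_⟩
  set a := μ.real (Metric.ball x₀ s)
  set L := ((j : ℝ) + 1) * Real.log 2
  have hL1 : 1 ≤ L := by
    have : (2 : ℝ) ≤ j + 1 := by exact_mod_cast Nat.succ_le_succ hj
    nlinarith [Real.log_two_gt_d9]
  have hlogN : Real.log ((2 ^ j : ℕ) : ℝ) ≤ L := by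
    push_cast
    rw [Real.log_pow]
    nlinarith [Real.log_two_gt_d9]
  rw [show Real.log ((2 ^ (j + 1) : ℕ) : ℝ) = L by push_cast; rw [Real.log_pow]; push_cast; rfl,
    div_le_iff₀ (by positivity)] at ha
  have hNa : L ^ (2 + ε) ≤ 2 * ((2 ^ j : ℕ) * a) :=
    calc _ ≤ a * ((2 ^ (j + 1) : ℕ) : ℝ) := ha
      _ = _ := by push_cast; ring
  have ha' : 1 / (2 * ((2 ^ j : ℕ) : ℝ)) ≤ a := by
    rw [div_le_iff₀ (by positivity)]
    linarith [Real.one_le_rpow hL1 (by linarith : 0 ≤ 2 + ε)]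
  calc _ ≤ (c * Real.log ((2 ^ j : ℕ) : ℝ) + 3) / ((2 ^ j : ℕ) * a) + K / ((2 ^ j : ℕ) : ℝ) :=
        hmiss _ (by positivity) _ hs hs1 ha'
    _ ≤ 2 * (c + 3) * L ^ (-(1 + ε)) + K * (1 / 2) ^ j := by
        gcongr
        · exact div_le_mul_rpow_neg_of_rpow_le hc hL1 hlogN hNa
        · push_cast
          rw [one_div_pow, mul_one_div]
    _ = _ := by
        rw [Real.mul_rpow (by positivity) (Real.log_pos one_lt_two).le]
        ring

end Parameters

/-- **Theorem 3 (Hölder 1).** If `(X,T,μ)` has exponential decay of correlations for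
`α`-Hölder functions, `μ` satisfies the annulus condition at `x₀`, and `(B_m)` is a
decreasing sequence of balls centred at `x₀` with `μ(B_m) ≥ m⁻¹ (log m)^{2+ε}` for all
large `m`, then the set of eventually always hitting points has full measure. -/
theorem stmt3 {X : Type*} [MetricSpace X] [MeasurableSpace X] [BorelSpace X]
    (μ : Measure X) [IsProbabilityMeasure μ] (T : X → X)
    (hT : MeasurePreserving T μ μ)
    (α : ℝ) (hα : α ∈ Set.Ioc (0 : ℝ) 1)
    (C τ : ℝ) (hC : 0 < C) (hτ : 0 < τ)
    (hdec : ∀ (n : ℕ) (f g : X → ℝ),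
      (∃ M, ∀ x, |f x| ≤ M) → (∃ K ≥ 0, ∀ x y, |f x - f y| ≤ K * dist x y ^ α) →
      (∃ M, ∀ x, |g x| ≤ M) → (∃ K ≥ 0, ∀ x y, |g x - g y| ≤ K * dist x y ^ α) →
      |(∫ x, f (T^[n] x) * g x ∂μ) - (∫ x, f x ∂μ) * ∫ x, g x ∂μ| ≤
        C * Real.exp (-τ * n) * holderNorm α f * holderNorm α g)
    (C' β : ℝ) (hC' : 0 < C') (hβ : 0 < β) (x₀ : X)
    (hann : ∀ ρ : ℝ, 0 ≤ ρ → ∀ s : ℝ, 0 < s → s < 1 →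
      (μ (Metric.ball x₀ (s + ρ) \ Metric.ball x₀ s)).toReal ≤ C' * ρ ^ β)
    (r : ℕ → ℝ) (hr : ∀ m, 0 < r m) (hr1 : ∀ m, r m < 1) (hrmono : Antitone r)
    (ε : ℝ) (hε : 0 < ε) (m₀ : ℕ)
    (hB : ∀ m : ℕ, m₀ ≤ m →
      Real.log m ^ (2 + ε) / m ≤ (μ (Metric.ball x₀ (r m))).toReal) :
    μ {x | ∀ᶠ m : ℕ in atTop, ∃ k < m, T^[k] x ∈ Metric.ball x₀ (r m)} = 1 := by
  obtain ⟨c, K, hmiss⟩ := exists_measureReal_missSet_dyadic_le hT hα.1.le hα.2 hC.le hτ hdec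
    hC'.le hβ hann hε.le
  refine measure_setOf_eventually_hit_eq_one (B := fun m => Metric.ball x₀ (r m))
    (fun m n hmn => Metric.ball_subset_ball (hrmono hmn)) ?_
  have hsum : Summable fun j : ℕ => ((j : ℝ) + 1) ^ (-(1 + ε)) := by
    simpa using (summable_nat_add_iff 1).2 (Real.summable_nat_rpow.2 (by linarith : -(1 + ε) < -1))
  refine Summable.of_norm_bounded_eventually_nat
    ((hsum.mul_left c).add (summable_geometric_two.mul_left K)) ?_
  filter_upwards [eventually_ge_atTop (max m₀ 1)] with j hj
  have hm₀ : m₀ ≤ 2 ^ (j + 1) := (le_of_max_le_left hj).trans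
    (Nat.lt_two_pow_self.le.trans (Nat.pow_le_pow_right two_pos j.le_succ))
  rw [Real.norm_of_nonneg measureReal_nonneg]
  exact hmiss j (le_of_max_le_right hj) _ (hr _) (hr1 _) (hB _ hm₀)
end

section
/- Let (X,T,μ) be a system with exponential decay of correlations for functions of bounded variation against L¹, with constants C, τ > 0. Let (B_m)_{m≥2} be a sequence of intervals in X and suppose there are constants c > 0 and ε > 0 such that μ(B_m) ≥ c m^{-1}(log m)^{1+ε} for all m ≥ 2. Then for μ-almost every x ∈ X, lim_{n→∞} Z_{2ⁿ}(x)/(2ⁿ μ(B_{2ⁿ})) = 1, where Z_m(x) = Σ_{k=0}^{m−1} 1_{B_m}(T^k x). In particular, for μ-almost every x, for all sufficiently large n there exists 0 ≤ k < 2ⁿ with T^k(x) ∈ B_{2ⁿ}. -/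
/-!
Let `Zₙ` be the Birkhoff sum of `1_{B_{2ⁿ}}` up to time `2ⁿ`, with mean `Pₙ = 2ⁿ μ(B_{2ⁿ})`.
An interval is the intersection of an upper and a lower set, so its indicator has variation at
most `2`; decay of correlations then bounds the covariance of `1_B ∘ Tʲ` and `1_B ∘ Tᵏ` by
`3 C μ(B) e^{-τ|j-k|}`, and summing the geometric series gives `Var Zₙ ≤ K Pₙ` with
`K = 6 C / (1 - e^{-τ})`. The growth
assumption makes `Pₙ ≥ c (n log 2)^{1+ε}`, so `∑ Var(Zₙ / Pₙ) ≤ K ∑ 1 / Pₙ < ∞`. Hence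
`∑ (Zₙ / Pₙ - 1)²` is integrable, thus a.e. finite, and `Zₙ / Pₙ → 1` almost everywhere.
-/

open MeasureTheory Filter Set ProbabilityTheory
open scoped ENNReal Topology

theorem IsUpperSet.eVariationOn_indicator_one_le {α : Type*} [LinearOrder α] {t : Set α}
    (ht : IsUpperSet t) : eVariationOn (t.indicator (1 : α → ℝ)) univ ≤ 1 := by
  have hmem : ∀ x, t.indicator (1 : α → ℝ) x ∈ Icc 0 1 := fun x => by
    by_cases hx : x ∈ t <;> simp [hx]
  have hmono : Monotone (t.indicator (1 : α → ℝ)) := by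
    intro x y hxy
    by_cases hx : x ∈ t
    · simp [hx, ht hxy hx]
    · simpa [hx] using (hmem y).1
  rw [eVariationOn.eq_biSup_inter_Icc]
  refine iSup₂_le fun p hp => ?_
  rw [(hmono.monotoneOn _).eVariationOn_eq hp.1 hp.2.1]
  exact ENNReal.ofReal_le_one.mpr (by linarith [(hmem p.1).1, (hmem p.2).2])

theorem IsLowerSet.eVariationOn_indicator_one_le {α : Type*} [LinearOrder α] {t : Set α}
    (ht : IsLowerSet t) : eVariationOn (t.indicator (1 : α → ℝ)) univ ≤ 1 := by
  have := IsUpperSet.eVariationOn_indicator_one_le (α := αᵒᵈ) ht.toDual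
  rwa [← eVariationOn.comp_ofDual, preimage_univ] at this

theorem Set.OrdConnected.eVariationOn_indicator_one_le_two {α : Type*} [LinearOrder α]
    {s : Set α} (hs : s.OrdConnected) : eVariationOn (s.indicator (1 : α → ℝ)) univ ≤ 2 := by
  have hbound : ∀ t : Set α, ∀ x ∈ univ, ‖t.indicator (1 : α → ℝ) x‖ₑ ≤ 1 := fun t x _ => by
    by_cases hx : x ∈ t <;> simp [hx]
  rw [← hs.upperClosure_inter_lowerClosure, inter_indicator_one]
  calc _ ≤ 1 * eVariationOn ((lowerClosure s : Set α).indicator 1) univ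
        + 1 * eVariationOn ((upperClosure s : Set α).indicator 1) univ :=
        eVariation_mul_le (hbound _) (hbound _)
    _ ≤ 1 * 1 + 1 * 1 := by
        gcongr
        exacts [(lowerClosure s).lower.eVariationOn_indicator_one_le,
          (upperClosure s).upper.eVariationOn_indicator_one_le]
    _ = 2 := by norm_num

theorem sum_range_pow_dist_le {r : ℝ} (hr0 : 0 ≤ r) (hr1 : r < 1) (j N : ℕ) :
    ∑ k ∈ Finset.range N, r ^ Nat.dist j k ≤ 2 / (1 - r) := by
  have hinj : ∀ s : Finset ℕ, InjOn (Nat.dist j) s →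
      ∑ k ∈ s, r ^ Nat.dist j k ≤ 1 / (1 - r) := by
    intro s hs
    rw [← Finset.sum_image hs, one_div, ← tsum_geometric_of_lt_one hr0 hr1]
    exact (summable_geometric_of_lt_one hr0 hr1).sum_le_tsum _ fun d _ => pow_nonneg hr0 d
  rw [← Finset.sum_filter_add_sum_filter_not _ (· ≤ j)]
  have hle := hinj ((Finset.range N).filter (· ≤ j)) fun a ha b hb h => by
    simp only [Finset.coe_filter, mem_ofPred_eq] at ha hb
    unfold Nat.dist at h
    omega
  have hgt := hinj ((Finset.range N).filter (¬ · ≤ j)) fun a ha b hb h => by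
    simp only [Finset.coe_filter, mem_ofPred_eq] at ha hb
    unfold Nat.dist at h
    omega
  linarith [show 2 / (1 - r) = 1 / (1 - r) + 1 / (1 - r) by ring]

theorem birkhoffSum_eq_sum_comp_iterate {α M : Type*} [AddCommMonoid M] (T : α → α)
    (f : α → M) (n : ℕ) : birkhoffSum T f n = ∑ k ∈ Finset.range n, f ∘ T^[k] := by
  ext x
  simp [birkhoffSum]

theorem ncard_setOf_iterate_mem_eq_birkhoffSum {α : Type*} (T : α → α) (s : Set α) (n : ℕ)
    (x : α) : ({k | k < n ∧ T^[k] x ∈ s}.ncard : ℝ) = birkhoffSum T (s.indicator 1) n x := by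
  classical
  have hset : {k | k < n ∧ T^[k] x ∈ s} = ↑((Finset.range n).filter (T^[·] x ∈ s)) := by
    ext k
    simp
  rw [hset, ncard_coe_finset, Finset.card_filter, birkhoffSum]
  push_cast
  simp [indicator_apply]

theorem exists_iterate_mem_of_birkhoffSum_indicator_ne_zero {α : Type*} {T : α → α}
    {s : Set α} {n : ℕ} {x : α} (h : birkhoffSum T (s.indicator 1) n x ≠ (0 : ℝ)) :
    ∃ k < n, T^[k] x ∈ s := by
  rw [← ncard_setOf_iterate_mem_eq_birkhoffSum, Nat.cast_ne_zero] at h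
  exact nonempty_of_ncard_ne_zero h

namespace MeasureTheory.MeasurePreserving

variable {Ω Ω' : Type*} [MeasurableSpace Ω] [MeasurableSpace Ω'] {μ : Measure Ω}
  {ν : Measure Ω'}

theorem integral_comp_of_aestronglyMeasurable {S : Ω → Ω'} (hS : MeasurePreserving S μ ν)
    {g : Ω' → ℝ} (hg : AEStronglyMeasurable g ν) : ∫ x, g (S x) ∂μ = ∫ y, g y ∂ν := by
  rw [← integral_map hS.aemeasurable (hS.map_eq ▸ hg), hS.map_eq]

theorem covariance_comp {S : Ω → Ω'} (hS : MeasurePreserving S μ ν) {X Y : Ω' → ℝ}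
    (hX : AEStronglyMeasurable X ν) (hY : AEStronglyMeasurable Y ν) :
    cov[X ∘ S, Y ∘ S; μ] = cov[X, Y; ν] := by
  rw [← covariance_map (hS.map_eq ▸ hX) (hS.map_eq ▸ hY) hS.aemeasurable, hS.map_eq]

variable {T : Ω → Ω} {f : Ω → ℝ}

theorem integral_birkhoffSum (hT : MeasurePreserving T μ μ) (hf : Integrable f μ) (n : ℕ) :
    ∫ x, birkhoffSum T f n x ∂μ = n * ∫ x, f x ∂μ := by
  simp_rw [birkhoffSum_eq_sum_comp_iterate, Finset.sum_apply]
  rw [integral_finsetSum _ fun k _ => (hT.iterate k).integrable_comp_of_integrable hf]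
  simp [(hT.iterate _).integral_comp_of_aestronglyMeasurable hf.aestronglyMeasurable]

theorem memLp_birkhoffSum (hT : MeasurePreserving T μ μ) {p : ℝ≥0∞} (hf : MemLp f p μ)
    (n : ℕ) : MemLp (birkhoffSum T f n) p μ := by
  rw [birkhoffSum_eq_sum_comp_iterate]
  exact memLp_finsetSum' _ fun k _ => hf.comp_measurePreserving (hT.iterate k)

theorem covariance_comp_iterate (hT : MeasurePreserving T μ μ) (hf : AEStronglyMeasurable f μ)
    (j k : ℕ) : cov[f ∘ T^[j], f ∘ T^[k]; μ] = cov[f ∘ T^[Nat.dist j k], f; μ] := by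
  wlog hkj : k ≤ j generalizing j k
  · rw [covariance_comm, this k j (by omega), Nat.dist_comm]
  have hsplit : f ∘ T^[j] = (f ∘ T^[j - k]) ∘ T^[k] := by
    rw [Function.comp_assoc, ← Function.iterate_add, Nat.sub_add_cancel hkj]
  rw [hsplit, (hT.iterate k).covariance_comp (hf.comp_measurePreserving (hT.iterate _)) hf,
    Nat.dist_eq_sub_of_le_right hkj]

theorem variance_birkhoffSum_le [IsFiniteMeasure μ] (hT : MeasurePreserving T μ μ)
    (hf : MemLp f 2 μ) {A r : ℝ} (hr0 : 0 ≤ r) (hr1 : r < 1)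
    (hcov : ∀ d, |cov[f ∘ T^[d], f; μ]| ≤ A * r ^ d) (N : ℕ) :
    Var[birkhoffSum T f N; μ] ≤ N * (2 * A / (1 - r)) := by
  have hA : 0 ≤ A := by simpa using (abs_nonneg _).trans (hcov 0)
  rw [birkhoffSum_eq_sum_comp_iterate,
    variance_sum' fun k _ => hf.comp_measurePreserving (hT.iterate k)]
  calc ∑ j ∈ Finset.range N, ∑ k ∈ Finset.range N, cov[f ∘ T^[j], f ∘ T^[k]; μ]
      ≤ ∑ j ∈ Finset.range N, ∑ k ∈ Finset.range N, A * r ^ Nat.dist j k := by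
        gcongr with j _ k _
        rw [hT.covariance_comp_iterate hf.aestronglyMeasurable]
        exact (le_abs_self _).trans (hcov _)
    _ ≤ ∑ j ∈ Finset.range N, A * (2 / (1 - r)) := by
        gcongr with j _
        rw [← Finset.mul_sum]
        exact mul_le_mul_of_nonneg_left (sum_range_pow_dist_le hr0 hr1 j N) hA
    _ = N * (2 * A / (1 - r)) := by
        rw [Finset.sum_const, Finset.card_range, nsmul_eq_mul]
        ring

end MeasureTheory.MeasurePreserving

section StrongLaw

variable {Ω : Type*} [MeasurableSpace Ω] {μ : Measure Ω}

theorem ae_tendsto_sub_integral_of_tsum_evariance_ne_top {X : ℕ → Ω → ℝ}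
    (hX : ∀ n, AEMeasurable (X n) μ) (hvar : ∑' n, eVar[X n; μ] ≠ ∞) :
    ∀ᵐ ω ∂μ, Tendsto (fun n => X n ω - μ[X n]) atTop (𝓝 0) := by
  have hmeas : ∀ n, AEMeasurable (fun ω => ‖X n ω - μ[X n]‖ₑ ^ 2) μ := fun n =>
    ((hX n).sub_const _).enorm.pow_const 2
  have hfin : ∫⁻ ω, ∑' n, ‖X n ω - μ[X n]‖ₑ ^ 2 ∂μ ≠ ∞ := by
    rwa [lintegral_tsum hmeas]
  filter_upwards [ae_lt_top' (AEMeasurable.tsum hmeas) hfin] with ω hω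
  have hsq := (ENNReal.continuous_rpow_const (y := (2 : ℕ)⁻¹)).tendsto 0 |>.comp
    (ENNReal.tendsto_atTop_zero_of_tsum_ne_top hω.ne)
  simp only [Function.comp_def, ENNReal.pow_rpow_inv_natCast two_ne_zero] at hsq
  exact tendsto_zero_iff_enorm_tendsto_zero.mpr (by simpa using hsq)

theorem ae_tendsto_div_integral_of_variance_le [IsFiniteMeasure μ] {Z : ℕ → Ω → ℝ} {K : ℝ}
    (hZ : ∀ n, MemLp (Z n) 2 μ) (hpos : ∀ n, 0 < μ[Z n])
    (hvar : ∀ n, Var[Z n; μ] ≤ K * μ[Z n]) (hsum : Summable fun n => (μ[Z n])⁻¹) :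
    ∀ᵐ ω ∂μ, Tendsto (fun n => Z n ω / μ[Z n]) atTop (𝓝 1) := by
  have hK : 0 ≤ K := nonneg_of_mul_nonneg_left ((variance_nonneg _ _).trans (hvar 0)) (hpos 0)
  set X : ℕ → Ω → ℝ := fun n ω => (μ[Z n])⁻¹ * Z n ω
  have hmean : ∀ n, μ[X n] = 1 := fun n => by
    simp only [X, integral_const_mul, inv_mul_cancel₀ (hpos n).ne']
  have hevar : ∀ n, eVar[X n; μ] ≤ ENNReal.ofReal (K * (μ[Z n])⁻¹) := fun n => by
    rw [evariance_mul, ← (hZ n).ofReal_variance_eq, ← ENNReal.ofReal_mul (sq_nonneg _)]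
    refine ENNReal.ofReal_le_ofReal ?_
    calc (μ[Z n])⁻¹ ^ 2 * Var[Z n; μ] ≤ (μ[Z n])⁻¹ ^ 2 * (K * μ[Z n]) := by
          gcongr
          exact hvar n
      _ = K * (μ[Z n])⁻¹ := by field_simp [(hpos n).ne']
  have htsum : ∑' n, eVar[X n; μ] ≠ ∞ := by
    refine ne_top_of_le_ne_top (ENNReal.ofReal_ne_top (r := ∑' n, K * (μ[Z n])⁻¹)) ?_
    rw [ENNReal.ofReal_tsum_of_nonneg (fun n => by have := hpos n; positivity) (hsum.mul_left K)]
    exact ENNReal.tsum_le_tsum hevar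
  filter_upwards [ae_tendsto_sub_integral_of_tsum_evariance_ne_top (X := X)
    (fun n => (hZ n).aemeasurable.const_mul _) htsum] with ω hω
  simp only [hmean, tendsto_sub_nhds_zero_iff] at hω
  simpa only [X, inv_mul_eq_div] using hω

end StrongLaw

def ExpDecayOfCorrelations {α : Type*} [LinearOrder α] [MeasurableSpace α] (μ : Measure α)
    (T : α → α) (C τ : ℝ) : Prop :=
  ∀ (n : ℕ) (f g : α → ℝ), Integrable f μ → BoundedVariationOn g univ →
    |(∫ x, f (T^[n] x) * g x ∂μ) - (∫ x, f x ∂μ) * ∫ x, g x ∂μ| ≤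
      C * Real.exp (-τ * n) * (∫ x, |f x| ∂μ) * ((⨆ x, |g x|) + (eVariationOn g univ).toReal)

theorem ExpDecayOfCorrelations.abs_covariance_indicator_le {α : Type*} [LinearOrder α]
    [MeasurableSpace α] {μ : Measure α} [IsProbabilityMeasure μ] {T : α → α} {C τ : ℝ}
    (hdec : ExpDecayOfCorrelations μ T C τ) (hT : MeasurePreserving T μ μ) (hC : 0 ≤ C)
    {s : Set α} (hs : s.OrdConnected) (hsm : MeasurableSet s) (d : ℕ) :
    |cov[s.indicator 1 ∘ T^[d], s.indicator 1; μ]| ≤ 3 * C * μ.real s * Real.exp (-τ) ^ d := by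
  set f := s.indicator (1 : α → ℝ)
  have hmem : ∀ x, f x ∈ Icc 0 1 := fun x => by by_cases hx : x ∈ s <;> simp [f, hx]
  have hf : MemLp f 2 μ := (memLp_const 1).indicator hsm
  have hvar : eVariationOn f univ ≤ 2 := hs.eVariationOn_indicator_one_le_two
  have hsup : ⨆ x, |f x| ≤ 1 :=
    Real.iSup_le (fun x => abs_le.mpr ⟨by linarith [(hmem x).1], (hmem x).2⟩) zero_le_one
  have habs : ∫ x, |f x| ∂μ = μ.real s := by
    simp_rw [abs_of_nonneg (hmem _).1]
    exact integral_indicator_one hsm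
  have hmean : ∫ x, (f ∘ T^[d]) x ∂μ = ∫ x, f x ∂μ :=
    (hT.iterate d).integral_comp_of_aestronglyMeasurable hf.aestronglyMeasurable
  rw [covariance_eq_sub (hf.comp_measurePreserving (hT.iterate d)) hf, hmean]
  calc _ ≤ C * Real.exp (-τ * d) * (∫ x, |f x| ∂μ) *
        ((⨆ x, |f x|) + (eVariationOn f univ).toReal) :=
        hdec d f f (hf.integrable one_le_two) (ne_top_of_le_ne_top (by simp) hvar)
    _ ≤ C * Real.exp (-τ * d) * μ.real s * (1 + 2) := by
        rw [habs]
        gcongr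
        exact ENNReal.toReal_le_of_le_ofReal zero_le_two (by simpa using hvar)
    _ = 3 * C * μ.real s * Real.exp (-τ) ^ d := by
        rw [mul_comm (-τ), Real.exp_nat_mul]
        ring

theorem mul_rpow_le_two_pow_mul_of_log_rpow_div_le {p : ℕ → ℝ} {c ε : ℝ}
    (hp : ∀ m : ℕ, 2 ≤ m → c * Real.log m ^ (1 + ε) / m ≤ p m) {n : ℕ} (hn : 1 ≤ n) :
    c * (n * Real.log 2) ^ (1 + ε) ≤ ((2 ^ n : ℕ) : ℝ) * p (2 ^ n) := by
  have h := hp (2 ^ n) (by simpa using Nat.pow_le_pow_right two_pos hn)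
  rw [Nat.cast_pow, Nat.cast_ofNat, Real.log_pow, div_le_iff₀' (by positivity)] at h
  simpa using h

theorem summable_inv_two_pow_mul_of_log_rpow_div_le {p : ℕ → ℝ} {c ε : ℝ} (hc : 0 < c)
    (hε : 0 < ε) (hp : ∀ m : ℕ, 2 ≤ m → c * Real.log m ^ (1 + ε) / m ≤ p m) :
    Summable fun n : ℕ => (((2 ^ (n + 1) : ℕ) : ℝ) * p (2 ^ (n + 1)))⁻¹ := by
  have hlog : 0 < Real.log 2 := Real.log_pos one_lt_two
  have hlow : ∀ n : ℕ, 0 < c * (((n + 1 : ℕ) : ℝ) * Real.log 2) ^ (1 + ε) := fun n => by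
    positivity
  have hzeta : Summable fun n : ℕ => (c * (((n + 1 : ℕ) : ℝ) * Real.log 2) ^ (1 + ε))⁻¹ := by
    simp_rw [Real.mul_rpow (Nat.cast_nonneg _) hlog.le, mul_inv, ← mul_assoc]
    have hp := ((Real.summable_nat_rpow_inv (p := 1 + ε)).mpr (by linarith)).comp_injective
      (add_left_injective 1)
    simpa [Function.comp_def] using (hp.mul_left c⁻¹).mul_right (Real.log 2 ^ (1 + ε))⁻¹
  refine hzeta.of_nonneg_of_le (fun n => ?_) fun n => ?_
  · exact (inv_pos.mpr ((hlow n).trans_le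
      (mul_rpow_le_two_pow_mul_of_log_rpow_div_le hp (by omega)))).le
  · exact inv_anti₀ (hlow n) (mul_rpow_le_two_pow_mul_of_log_rpow_div_le hp (by omega))

/-- Along the subsequence `m_n = 2^n`, if `μ(B_m) ≥ c m⁻¹ (log m)^{1+ε}` then a.e.
`Z_{2^n}(x)/(2^n μ(B_{2^n})) → 1`; in particular, a.e. `x` eventually hits `B_{2^n}`
within time `2^n`. -/
theorem stmt7
    (μ : Measure ℝ) [IsProbabilityMeasure μ] (T : ℝ → ℝ)
    (hT : MeasurePreserving T μ μ)
    (C τ : ℝ) (hC : 0 < C) (hτ : 0 < τ)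
    (hdec : ∀ (n : ℕ) (f g : ℝ → ℝ), Integrable f μ → BoundedVariationOn g Set.univ →
      |(∫ x, f (T^[n] x) * g x ∂μ) - (∫ x, f x ∂μ) * ∫ x, g x ∂μ| ≤
        C * Real.exp (-τ * n) * (∫ x, |f x| ∂μ) *
          ((⨆ x, |g x|) + (eVariationOn g Set.univ).toReal))
    (B : ℕ → Set ℝ) (hBint : ∀ m, (B m).OrdConnected)
    (c ε : ℝ) (hc : 0 < c) (hε : 0 < ε)
    (hB : ∀ m : ℕ, 2 ≤ m → c * Real.log m ^ (1 + ε) / m ≤ (μ (B m)).toReal) :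
    ∀ᵐ x ∂μ,
      Tendsto (fun n : ℕ =>
          ({k : ℕ | k < 2 ^ n ∧ T^[k] x ∈ B (2 ^ n)}.ncard : ℝ) /
            ((2 ^ n : ℕ) * (μ (B (2 ^ n))).toReal))
        atTop (nhds 1) ∧
      ∀ᶠ n : ℕ in atTop, ∃ k < 2 ^ n, T^[k] x ∈ B (2 ^ n) := by
  have hr0 : 0 ≤ Real.exp (-τ) := (Real.exp_pos _).le
  have hr1 : Real.exp (-τ) < 1 := Real.exp_lt_one_iff.mpr (neg_neg_of_pos hτ)
  have hmeas : ∀ m, MeasurableSet (B m) := fun m => (hBint m).measurableSet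
  have hind : ∀ m, MemLp ((B m).indicator (1 : ℝ → ℝ)) 2 μ := fun m =>
    (memLp_const 1).indicator (hmeas m)
  set Z : ℕ → ℝ → ℝ := fun n => birkhoffSum T ((B (2 ^ n)).indicator 1) (2 ^ n) with hZ
  have hmean : ∀ n, μ[Z n] = ((2 ^ n : ℕ) : ℝ) * (μ (B (2 ^ n))).toReal := fun n => by
    rw [hZ, hT.integral_birkhoffSum ((hind _).integrable one_le_two),
      integral_indicator_one (hmeas _), measureReal_def]
  have hvar : ∀ n, Var[Z n; μ] ≤ 6 * C / (1 - Real.exp (-τ)) * μ[Z n] := fun n => by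
    refine (hT.variance_birkhoffSum_le (hind _) hr0 hr1
      (ExpDecayOfCorrelations.abs_covariance_indicator_le hdec hT hC.le (hBint _) (hmeas _))
      _).trans_eq ?_
    rw [hmean, measureReal_def]
    ring
  have hpos : ∀ n, 0 < μ[Z (n + 1)] := fun n => by
    rw [hmean]
    exact (by positivity : 0 < c * (((n + 1 : ℕ) : ℝ) * Real.log 2) ^ (1 + ε)).trans_le
      (mul_rpow_le_two_pow_mul_of_log_rpow_div_le hB (by omega))
  have hsum : Summable fun n => (μ[Z (n + 1)])⁻¹ := by
    simpa only [hmean] using summable_inv_two_pow_mul_of_log_rpow_div_le hc hε hB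
  filter_upwards [ae_tendsto_div_integral_of_variance_le
    (fun n => hT.memLp_birkhoffSum (hind _) _) hpos
    (fun n => hvar (n + 1)) hsum] with x hx
  have hratio : Tendsto (fun n => Z n x / μ[Z n]) atTop (nhds 1) :=
    (tendsto_add_atTop_iff_nat 1).mp hx
  simp only [ncard_setOf_iterate_mem_eq_birkhoffSum, ← hmean]
  refine ⟨hratio, ?_⟩
  filter_upwards [hratio.eventually (lt_mem_nhds one_pos)] with n hn
  exact exists_iterate_mem_of_birkhoffSum_indicator_ne_zero (div_ne_zero_iff.mp hn.ne').1
end
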